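/- Let P be a finite PIP. The cardinality |P| equals Σ_{i≥1} (-1)^{i-1} · i · f_i(⊞_P), where f_i(⊞_P) is the number of pairs (I, M) with I a consistent downset of P and M ⊆ max I with |M| = i. -/

import Mathlib

/-! Group the faces `C(I, M)` of `⊞_P` by `I`. A consistent downset `I` contributes
`∑_{M ⊆ max I} (-1)^(|M|-1) |M|`, which by the binomial theorem is `1` if `I` has exactly one
maximal element and `0` otherwise. The consistent downsets with one maximal element are the
principal downsets `↓x`, and every `↓x` is consistent since inconsistency is irreflexive and
inherited upward; so the sum counts the elements of `P`. -/

open Finset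

variable {P : Type*} [Fintype P] [DecidableEq P] [PartialOrder P]

/-- A subset is consistent if it contains no inconsistent pair. -/
def Consistent (incons : P → P → Prop) (S : Finset P) : Prop :=
  ∀ a ∈ S, ∀ b ∈ S, ¬ incons a b

/-- A downset (order ideal). -/
def IsDownset (I : Finset P) : Prop :=
  ∀ x ∈ I, ∀ y, y ≤ x → y ∈ I

open Classical in
/-- The maximal elements of a finite set. -/
noncomputable def maxElems (I : Finset P) : Finset P :=
  I.filter (fun x => ∀ y ∈ I, ¬ x < y)

open Classical in
/-- The downset generated by a set. -/
noncomputable def downGen (A : Finset P) : Finset P :=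
  Finset.univ.filter (fun x => ∃ a ∈ A, x ≤ a)

/-- A consistent antichain: the faces of the crossing complex `Δ_P`. -/
def ConsAntichain (incons : P → P → Prop) (A : Finset P) : Prop :=
  (∀ a ∈ A, ∀ b ∈ A, a ≠ b → ¬ a ≤ b) ∧ Consistent incons A

/-- A face of the cubical complex `⊞_P`: a pair (I, M) with I a consistent
downset and M ⊆ max I. -/
def IsFace (incons : P → P → Prop) (I M : Finset P) : Prop :=
  IsDownset I ∧ Consistent incons I ∧ M ⊆ maxElems I

/-- The face-containment order on faces of `⊞_P`:
`C(I',M') ⊆ C(I,M)` iff `M' ⊆ M` and `I \ M ⊆ I' ⊆ I`. -/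
def FaceLE (p q : Finset P × Finset P) : Prop :=
  p.2 ⊆ q.2 ∧ q.1 \ q.2 ⊆ p.1 ∧ p.1 ⊆ q.1

open Classical in
/-- `f_i(⊞_P)`: the number of `i`-dimensional faces `C(I,M)` of the cubical
complex `⊞_P`, i.e. pairs `(I, M)` with `I` a consistent downset, `M ⊆ max I`
and `|M| = i`. -/
noncomputable def cubeFaceCount (incons : P → P → Prop) (i : ℕ) : ℕ :=
  (Finset.univ.filter (fun p : Finset P × Finset P =>
    IsDownset p.1 ∧ Consistent incons p.1 ∧ p.2 ⊆ maxElems p.1 ∧ p.2.card = i)).card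

open Classical in
/-- `f_{j-1}(Δ_P)`: the number of consistent antichains of cardinality `j`. -/
noncomputable def antichainCount (incons : P → P → Prop) (j : ℕ) : ℕ :=
  (Finset.univ.filter (fun A : Finset P => ConsAntichain incons A ∧ A.card = j)).card

theorem Finset.sum_powerset_neg_one_pow_card_sub_one_mul_card {α : Type*} (A : Finset α) :
    ∑ M ∈ A.powerset, (-1 : ℤ) ^ (#M - 1) * #M = if #A = 1 then 1 else 0 := by
  rw [sum_powerset_apply_card (fun k => (-1 : ℤ) ^ (k - 1) * k)]
  cases #A with
  | zero => simp
  | succ m =>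
    have hterm : ∀ k, (m + 1).choose (k + 1) • ((-1 : ℤ) ^ (k + 1 - 1) * (k + 1 : ℕ)) =
        (m + 1 : ℕ) * ((-1) ^ k * m.choose k) := by
      intro k
      rw [nsmul_eq_mul, Nat.add_sub_cancel, ← mul_assoc, mul_comm _ ((-1 : ℤ) ^ k), mul_assoc,
        ← Nat.cast_mul, ← Nat.add_one_mul_choose_eq]
      push_cast
      ring
    rw [sum_range_succ', Finset.sum_congr rfl fun k _ => hterm k, ← mul_sum,
      Int.alternating_sum_range_choose]
    split_ifs <;> simp_all

open Classical in
noncomputable def consistentDownsets (incons : P → P → Prop) : Finset (Finset P) :=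
  univ.filter fun I => IsDownset I ∧ Consistent incons I

open Classical in
noncomputable def cubeFaces (incons : P → P → Prop) : Finset (Finset P × Finset P) :=
  univ.filter fun p => IsFace incons p.1 p.2

section

variable {incons : P → P → Prop}

lemma mem_maxElems {I : Finset P} {x : P} :
    x ∈ maxElems I ↔ x ∈ I ∧ ∀ y ∈ I, ¬ x < y := by
  classical simp [maxElems]

omit [DecidableEq P] in
lemma mem_downGen {A : Finset P} {x : P} : x ∈ downGen A ↔ ∃ a ∈ A, x ≤ a := by
  classical simp [downGen]

omit [DecidableEq P] in
lemma mem_downGen_singleton {x y : P} : y ∈ downGen {x} ↔ y ≤ x := by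
  simp [mem_downGen]

omit [DecidableEq P] in
lemma isDownset_downGen (A : Finset P) : IsDownset (downGen A) := by
  intro x hx y hyx
  obtain ⟨a, ha, hxa⟩ := mem_downGen.1 hx
  exact mem_downGen.2 ⟨a, ha, hyx.trans hxa⟩

lemma IsDownset.downGen_maxElems {I : Finset P} (hI : IsDownset I) :
    downGen (maxElems I) = I := by
  ext x
  refine ⟨fun hx => ?_, fun hx => ?_⟩
  · obtain ⟨a, ha, hxa⟩ := mem_downGen.1 hx
    exact hI a (mem_maxElems.1 ha).1 x hxa
  · obtain ⟨b, hxb, hb⟩ := I.exists_le_maximal hx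
    have hbmax : b ∈ maxElems I :=
      mem_maxElems.2 ⟨hb.1, fun y hy hby => hby.not_ge (hb.2 hy hby.le)⟩
    exact mem_downGen.2 ⟨b, hbmax, hxb⟩

lemma maxElems_downGen_singleton (x : P) : maxElems (downGen {x}) = {x} := by
  ext y
  simp only [mem_maxElems, mem_downGen_singleton, mem_singleton]
  refine ⟨fun ⟨hyx, hmax⟩ => ?_, fun hyx => ⟨hyx.le, fun z hzx hyz => (hyx ▸ hyz).not_ge hzx⟩⟩
  exact hyx.eq_of_not_lt (hmax x le_rfl)

omit [DecidableEq P] in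
lemma consistent_downGen_singleton (hirr : ∀ a, ¬ incons a a)
    (hup : ∀ a b a' b', incons a b → a ≤ a' → b ≤ b' → incons a' b') (x : P) :
    Consistent incons (downGen {x}) := by
  intro a ha b hb hab
  exact hirr x (hup a b x x hab (mem_downGen_singleton.1 ha) (mem_downGen_singleton.1 hb))

omit [DecidableEq P] in
lemma mem_consistentDownsets {I : Finset P} :
    I ∈ consistentDownsets incons ↔ IsDownset I ∧ Consistent incons I := by
  simp [consistentDownsets]

lemma mem_cubeFaces {p : Finset P × Finset P} :
    p ∈ cubeFaces incons ↔ p.1 ∈ consistentDownsets incons ∧ p.2 ∈ (maxElems p.1).powerset := by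
  classical
  rw [cubeFaces, mem_filter, mem_consistentDownsets, mem_powerset]
  simp only [mem_univ, true_and, IsFace, and_assoc]

lemma cubeFaceCount_eq_card_filter (i : ℕ) :
    cubeFaceCount incons i = #{p ∈ cubeFaces incons | #p.2 = i} := by
  classical
  rw [cubeFaceCount, cubeFaces, filter_filter]
  exact congrArg card (filter_congr fun p _ => by simp only [IsFace, and_assoc])

lemma sum_range_mul_cubeFaceCount (g : ℕ → ℤ) :
    ∑ i ∈ range (Fintype.card P + 1), g i * cubeFaceCount incons i =
      ∑ p ∈ cubeFaces incons, g #p.2 := by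
  have hcard : ∀ p ∈ cubeFaces incons, #p.2 ∈ range (Fintype.card P + 1) :=
    fun p _ => mem_range.2 (Nat.lt_succ_of_le (card_le_univ p.2))
  rw [← sum_fiberwise_of_maps_to hcard]
  refine sum_congr rfl fun i _ => ?_
  rw [cubeFaceCount_eq_card_filter, sum_congr rfl fun p hp => congrArg g (mem_filter.1 hp).2,
    sum_const, nsmul_eq_mul, mul_comm]

lemma downGen_singleton_injective : Function.Injective (fun x : P => downGen {x}) := by
  intro x y hxy
  simpa [maxElems_downGen_singleton] using congrArg maxElems hxy

lemma card_filter_card_maxElems_eq_one (hirr : ∀ a, ¬ incons a a)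
    (hup : ∀ a b a' b', incons a b → a ≤ a' → b ≤ b' → incons a' b') :
    #{I ∈ consistentDownsets incons | #(maxElems I) = 1} = Fintype.card P := by
  rw [← card_univ, ← card_image_of_injective univ downGen_singleton_injective]
  congr 1
  ext I
  simp only [mem_filter, mem_consistentDownsets, card_eq_one, mem_image, mem_univ, true_and]
  constructor
  · rintro ⟨⟨hI, -⟩, x, hx⟩
    exact ⟨x, by rw [← hx, hI.downGen_maxElems]⟩
  · rintro ⟨x, rfl⟩
    exact ⟨⟨isDownset_downGen _, consistent_downGen_singleton hirr hup x⟩, x,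
      maxElems_downGen_singleton x⟩

end

theorem card_eq_alternating_sum_general (incons : P → P → Prop)
    (hirr : ∀ a, ¬ incons a a)
    (hup : ∀ a b a' b', incons a b → a ≤ a' → b ≤ b' → incons a' b') :
    (Fintype.card P : ℤ) =
      ∑ i ∈ Finset.range (Fintype.card P + 1),
        (-1 : ℤ) ^ (i - 1) * (i : ℤ) * (cubeFaceCount incons i : ℤ) := by
  rw [sum_range_mul_cubeFaceCount (fun i => (-1 : ℤ) ^ (i - 1) * i),
    sum_finset_product _ (consistentDownsets incons) (fun I => (maxElems I).powerset)
      fun _ => mem_cubeFaces]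
  simp only [sum_powerset_neg_one_pow_card_sub_one_mul_card, sum_boole,
    card_filter_card_maxElems_eq_one hirr hup]

/-- The number of hyperplanes of `⊞_P` (i.e. `|P|`) equals
`Σ_{i≥1} (-1)^{i-1} · i · f_i(⊞_P)`. -/
theorem card_eq_alternating_sum (incons : P → P → Prop)
    (hirr : ∀ a, ¬ incons a a)
    (hsymm : ∀ a b, incons a b → incons b a)
    (hup : ∀ a b a' b', incons a b → a ≤ a' → b ≤ b' → incons a' b') :
    (Fintype.card P : ℤ) =
      ∑ i ∈ Finset.range (Fintype.card P + 1),
        (-1 : ℤ) ^ (i - 1) * (i : ℤ) * (cubeFaceCount incons i : ℤ) :=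
  card_eq_alternating_sum_general incons hirr hup
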